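/- For $n \ge 3$, in the ring $S = \mathbb{Z}[c_2,\dots,c_{2n},e]/(2c_{odd}, e^2 - (-1)^n c_{2n})$ (modeling $H^*BSO(2n)$), the element $e$ does not lie in the subring generated by $c_2,\dots,c_{2n}$ together with $2^{n-1}(n-1)!\, e$; equivalently, the subring $\mathbb{Z}[c_2,\dots,c_{2n}, 2^{n-1}(n-1)!\,e]$ is a proper subring of $S$ of finite index in each graded degree. -/
import Mathlib


noncomputable section
open MvPolynomial

/-- The defining ideal of `S = ℤ[c₂,…,c₂ₙ,e]/(2c_odd, e² - (-1)ⁿc₂ₙ)`, modeling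
`H^*BSO(2n)`. The variable `some i` represents `c_{i+2}` and `none` the Euler class `e`. -/
def cohIdeal (n : ℕ) (hn : 1 ≤ n) : Ideal (MvPolynomial (Option (Fin (2 * n - 1))) ℤ) :=
  Ideal.span
    ({p | ∃ i : Fin (2 * n - 1), Odd (i.val + 2) ∧ p = 2 * X (some i)} ∪
     {X none ^ 2 - (-1 : MvPolynomial (Option (Fin (2 * n - 1))) ℤ) ^ n *
        X (some ⟨2 * n - 2, by omega⟩)})

open TrivSqZeroExt DualNumber in
/-- The ring hom `ℤ[c,e] → (ℤ/2)[ε]` sending `e ↦ ε` and all `cᵢ ↦ 0`. -/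
def toDual (n : ℕ) : MvPolynomial (Option (Fin (2 * n - 1))) ℤ →+* DualNumber (ZMod 2) :=
  (MvPolynomial.aeval (fun o : Option (Fin (2 * n - 1)) =>
    o.elim (ε : DualNumber (ZMod 2)) (fun _ => 0))).toRingHom

open TrivSqZeroExt DualNumber in
lemma two_eq_zero_dual : (2 : DualNumber (ZMod 2)) = 0 := by
  have h : (2 : DualNumber (ZMod 2)) = TrivSqZeroExt.inl (2 : ZMod 2) := by
    rw [show (2 : ZMod 2) = 1 + 1 by norm_num, TrivSqZeroExt.inl_add, TrivSqZeroExt.inl_one]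
    ring
  rw [h, show (2 : ZMod 2) = 0 by decide, TrivSqZeroExt.inl_zero]

open TrivSqZeroExt DualNumber in
lemma coh_le_ker (n : ℕ) (hn : 1 ≤ n) :
    cohIdeal n hn ≤ RingHom.ker (toDual n) := by
  rw [cohIdeal, Ideal.span_le]
  rintro p (⟨i, hi, rfl⟩ | rfl)
  · simp only [RingHom.mem_ker, toDual, AlgHom.toRingHom_eq_coe, SetLike.mem_coe,
      RingHom.coe_coe, map_mul, aeval_X, Option.elim]
    simp [two_eq_zero_dual]
  · simp only [RingHom.mem_ker, toDual, AlgHom.toRingHom_eq_coe, SetLike.mem_coe,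
      RingHom.coe_coe, map_sub, map_pow, map_mul, aeval_X, Option.elim]
    simp [pow_two, eps_mul_eps]

open TrivSqZeroExt DualNumber in
/-- For `n ≥ 3`, in `S = ℤ[c₂,…,c₂ₙ,e]/(2c_odd, e² - (-1)ⁿc₂ₙ)` the Euler class `e` does
not lie in the subring generated by `c₂,…,c₂ₙ` together with `2^(n-1)·(n-1)!·e`
(the latter being `cₙ(Dₙ⁺)` modulo Chern classes of the standard representation). -/
theorem euler_not_in_chern_subring (n : ℕ) (hn : 3 ≤ n) :
    Ideal.Quotient.mk (cohIdeal n (Nat.le_of_succ_le (Nat.le_of_succ_le hn))) (X none) ∉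
      Subring.closure
        ({x | ∃ i : Fin (2 * n - 1), x = Ideal.Quotient.mk (cohIdeal n (Nat.le_of_succ_le (Nat.le_of_succ_le hn))) (X (some i))} ∪
         {((2 ^ (n - 1) * Nat.factorial (n - 1) : ℕ) :
            MvPolynomial (Option (Fin (2 * n - 1))) ℤ ⧸ cohIdeal n (Nat.le_of_succ_le (Nat.le_of_succ_le hn))) *
            Ideal.Quotient.mk (cohIdeal n (Nat.le_of_succ_le (Nat.le_of_succ_le hn))) (X none)}) := by
  intro hmem
  set hn1 : 1 ≤ n := Nat.le_of_succ_le (Nat.le_of_succ_le hn)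
  -- the induced map on the quotient
  set g : (MvPolynomial (Option (Fin (2 * n - 1))) ℤ ⧸ cohIdeal n hn1) →+* DualNumber (ZMod 2) :=
    Ideal.Quotient.lift (cohIdeal n hn1) (toDual n) (fun a ha => coh_le_ker n hn1 ha) with hg
  have hgX : ∀ p, g (Ideal.Quotient.mk (cohIdeal n hn1) p) = toDual n p := fun p =>
    Ideal.Quotient.lift_mk _ _ _
  -- image of e is ε
  have heps : g (Ideal.Quotient.mk (cohIdeal n hn1) (X none)) = (ε : DualNumber (ZMod 2)) := by
    rw [hgX]
    simp [toDual, Option.elim]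
  set s : Set (MvPolynomial (Option (Fin (2 * n - 1))) ℤ ⧸ cohIdeal n hn1) :=
    ({x | ∃ i : Fin (2 * n - 1), x = Ideal.Quotient.mk (cohIdeal n hn1) (X (some i))} ∪
     {((2 ^ (n - 1) * Nat.factorial (n - 1) : ℕ) :
        MvPolynomial (Option (Fin (2 * n - 1))) ℤ ⧸ cohIdeal n hn1) *
        Ideal.Quotient.mk (cohIdeal n hn1) (X none)}) with hs
  -- ε lies in the closure of the image of the generating set
  have h1 : (ε : DualNumber (ZMod 2)) ∈ Subring.closure (⇑g '' s) := by
    rw [← RingHom.map_closure]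
    exact ⟨_, hmem, heps⟩
  -- the image of the generating set is {0}
  have h2 : ⇑g '' s ⊆ ({0} : Set (DualNumber (ZMod 2))) := by
    rw [hs]
    rintro x ⟨y, (⟨i, rfl⟩ | rfl), rfl⟩
    · rw [hgX]
      simp [toDual, Option.elim]
    · rw [map_mul, heps, map_natCast]
      have h2d : (2 : ℕ) ∣ 2 ^ (n - 1) * Nat.factorial (n - 1) :=
        Dvd.dvd.mul_right (dvd_pow_self 2 (by omega)) _
      obtain ⟨k, hk⟩ := h2d
      rw [hk]
      push_cast
      rw [two_eq_zero_dual]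
      simp
  have h3 : (ε : DualNumber (ZMod 2)) ∈ Subring.closure ({0} : Set (DualNumber (ZMod 2))) :=
    Subring.closure_mono h2 h1
  have h4 : Subring.closure ({0} : Set (DualNumber (ZMod 2))) ≤
      (Int.castRingHom (DualNumber (ZMod 2))).range := by
    rw [Subring.closure_le]
    rintro x rfl
    exact ⟨0, by simp⟩
  obtain ⟨m, hm⟩ := h4 h3
  have : (TrivSqZeroExt.snd (ε : DualNumber (ZMod 2)) : ZMod 2) = 1 := DualNumber.snd_eps
  rw [← hm] at this
  rw [show ((Int.castRingHom (DualNumber (ZMod 2))) m) = (m : DualNumber (ZMod 2)) from rfl,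
    TrivSqZeroExt.snd_intCast] at this
  exact zero_ne_one this
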